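/- Let X : Ω → ℝ^n and E : Ω → ℝ^m be independent random variables with probability densities f and h with respect to Lebesgue measure, Θ : ℝ^n → ℝ^m measurable, and G := Θ(X) + E. Then for (law of G)-almost every g ∈ ℝ^m with normalizing constant Z(g) := ∫_{ℝ^n} f(x) h(g − Θ(x)) dx satisfying 0 < Z(g) < ∞, the regular conditional distribution of X given G = g is absolutely continuous with respect to Lebesgue measure on ℝ^n with density x ↦ f(x) h(g − Θ(x)) / Z(g). -/

import Mathlib

/-!
The pair `(X, E)` has the product density `f(x) h(e)`, and the shear `(x, e) ↦ (Θ x + e, x)`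
preserves Lebesgue measure, so `(G, X)` has the joint density `ρ(g, x) = f(x) h(g − Θ x)`.
A joint density disintegrates as the marginal density `Z(g) = ∫ ρ(g, x) dx` of `G` times the
kernel of normalized sections `ρ(g, ·) / Z(g)`; since `Z` is integrable it is a.e. finite, and
the uniqueness of disintegrations identifies this kernel with the conditional distribution.
-/

open MeasureTheory ProbabilityTheory

open scoped ENNReal

namespace MeasureTheory

variable {α β : Type*} [MeasurableSpace α] [MeasurableSpace β]

theorem ofReal_div_integral_eq_div_lintegral {μ : Measure α} {F : α → ℝ} (hF : 0 ≤ᵐ[μ] F)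
    (hFm : AEStronglyMeasurable F μ) (hpos : 0 < ∫ x, F x ∂μ) (c : ℝ) :
    ENNReal.ofReal (c / ∫ x, F x ∂μ) = ENNReal.ofReal c / ∫⁻ x, ENNReal.ofReal (F x) ∂μ := by
  rw [ENNReal.ofReal_div_of_pos hpos]
  rw [integral_eq_lintegral_of_nonneg_ae hF hFm] at hpos ⊢
  rw [ENNReal.ofReal_toReal (ENNReal.toReal_pos_iff.mp hpos).2.ne]

theorem Measure.map_withDensity_comp (μ : Measure α) {T : α → β} (hT : Measurable T)
    {ρ : β → ℝ≥0∞} (hρ : Measurable ρ) :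
    (μ.withDensity (ρ ∘ T)).map T = (μ.map T).withDensity ρ := by
  ext s hs
  rw [Measure.map_apply hT hs, withDensity_apply _ (hT hs), withDensity_apply _ hs,
    setLIntegral_map hs hρ hT]
  rfl

theorem Measure.map_add_prodMk_prod_withDensity {G : Type*} [AddCommGroup G] [MeasurableSpace G]
    [MeasurableAdd₂ G] [MeasurableSub₂ G] (μ : Measure α) (ν : Measure G) [SFinite μ] [SFinite ν]
    [ν.IsAddLeftInvariant] {Θ : α → G} (hΘ : Measurable Θ) {f : α → ℝ≥0∞} {h : G → ℝ≥0∞}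
    (hf : Measurable f) (hh : Measurable h) :
    ((μ.withDensity f).prod (ν.withDensity h)).map (fun p ↦ (Θ p.1 + p.2, p.1)) =
      (ν.prod μ).withDensity (fun q ↦ f q.2 * h (q.1 - Θ q.2)) := by
  have hT : MeasurePreserving (fun p : α × G ↦ (Θ p.1 + p.2, p.1)) (μ.prod ν) (ν.prod μ) :=
    measurePreserving_swap.comp <| (MeasurePreserving.id μ).skew_product
      (g := fun x e ↦ Θ x + e) (by fun_prop) (ae_of_all _ fun x ↦ map_add_left_eq_self ν (Θ x))
  rw [prod_withDensity hf hh, ← hT.map_eq, ← map_withDensity_comp _ hT.measurable (by fun_prop)]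
  congr with p
  simp

theorem Measure.fst_withDensity_prod (μ : Measure α) (ν : Measure β) [SFinite μ] [SFinite ν]
    {ρ : α × β → ℝ≥0∞} (hρ : Measurable ρ) :
    ((μ.prod ν).withDensity ρ).fst = μ.withDensity (fun a ↦ ∫⁻ b, ρ (a, b) ∂ν) := by
  ext s hs
  rw [Measure.fst_apply hs, withDensity_apply _ (measurable_fst hs), withDensity_apply _ hs,
    ← Set.prod_univ, setLIntegral_prod _ hρ.aemeasurable]
  simp only [Measure.restrict_univ]

theorem ae_lintegral_prod_right_ne_top (μ : Measure α) (ν : Measure β) [SFinite ν]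
    {ρ : α × β → ℝ≥0∞} (hρ : Measurable ρ) (hfin : ∫⁻ p, ρ p ∂(μ.prod ν) ≠ ∞) :
    ∀ᵐ a ∂μ, ∫⁻ b, ρ (a, b) ∂ν ≠ ∞ := by
  rw [lintegral_prod _ hρ.aemeasurable] at hfin
  filter_upwards [ae_lt_top hρ.lintegral_prod_right' hfin] with a ha using ha.ne

end MeasureTheory

namespace ProbabilityTheory.Kernel

variable {α β : Type*} [MeasurableSpace α] [MeasurableSpace β] (ν : Measure β) [SFinite ν]
  {ρ : α × β → ℝ≥0∞}

/-- Where the normalizing integral is `0`, the quotient is `∞` exactly off the zero set of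
`ρ (a, ·)`, which is then `ν`-null, so the measure is `0`; where it is `∞`, the quotient is `0`. -/
noncomputable def condOfDensity (ρ : α × β → ℝ≥0∞) : Kernel α β :=
  (Kernel.const α ν).withDensity fun a b ↦ ρ (a, b) / ∫⁻ b', ρ (a, b') ∂ν

theorem measurable_condOfDensity_density (hρ : Measurable ρ) :
    Measurable (Function.uncurry fun a b ↦ ρ (a, b) / ∫⁻ b', ρ (a, b') ∂ν) :=
  hρ.div (hρ.lintegral_prod_right'.comp measurable_fst)

theorem condOfDensity_apply (hρ : Measurable ρ) (a : α) :
    condOfDensity ν ρ a = ν.withDensity fun b ↦ ρ (a, b) / ∫⁻ b', ρ (a, b') ∂ν := by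
  rw [condOfDensity, Kernel.withDensity_apply _ (measurable_condOfDensity_density ν hρ),
    Kernel.const_apply]

theorem isFiniteKernel_condOfDensity (hρ : Measurable ρ) :
    IsFiniteKernel (condOfDensity ν ρ) := by
  refine ⟨⟨1, ENNReal.one_lt_top, fun a ↦ ?_⟩⟩
  rw [condOfDensity_apply ν hρ, withDensity_apply _ MeasurableSet.univ, Measure.restrict_univ]
  simp_rw [div_eq_mul_inv]
  rw [lintegral_mul_const (f := fun b ↦ ρ (a, b)) _ (hρ.comp measurable_prodMk_left)]
  exact ENNReal.mul_inv_le_one _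

end ProbabilityTheory.Kernel

namespace MeasureTheory.Measure

variable {α β : Type*} [MeasurableSpace α] [MeasurableSpace β]

theorem withDensity_prod_eq_compProd_condOfDensity (μ : Measure α) (ν : Measure β) [SFinite μ]
    [SFinite ν] {ρ : α × β → ℝ≥0∞} (hρ : Measurable ρ) (hfin : ∫⁻ p, ρ p ∂(μ.prod ν) ≠ ∞) :
    (μ.prod ν).withDensity ρ =
      μ.withDensity (fun a ↦ ∫⁻ b, ρ (a, b) ∂ν) ⊗ₘ Kernel.condOfDensity ν ρ := by
  have hκ := Kernel.isFiniteKernel_condOfDensity ν hρ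
  rw [Kernel.condOfDensity] at hκ ⊢
  have hZ : Measurable fun a ↦ ∫⁻ b, ρ (a, b) ∂ν := hρ.lintegral_prod_right'
  have hd := Kernel.measurable_condOfDensity_density ν hρ
  rw [compProd_withDensity hd, compProd_const, prod_withDensity_left hZ]
  refine .symm ((withDensity_mul _ (hZ.comp measurable_fst) hd).symm.trans
    (withDensity_congr_ae ?_))
  rw [Filter.EventuallyEq, ae_prod_iff_ae_ae
    (measurableSet_eq_fun ((hZ.comp measurable_fst).mul hd) hρ)]
  filter_upwards [ae_lintegral_prod_right_ne_top μ ν hρ hfin] with a hZ_ne_top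
  by_cases hZ_zero : ∫⁻ b, ρ (a, b) ∂ν = 0
  · filter_upwards [(lintegral_eq_zero_iff (hρ.comp measurable_prodMk_left)).mp hZ_zero]
      with b hb
    simpa [hZ_zero] using hb.symm
  · exact ae_of_all _ fun b ↦ ENNReal.mul_div_cancel hZ_zero hZ_ne_top

end MeasureTheory.Measure

namespace ProbabilityTheory

variable {α β Ω : Type*} [MeasurableSpace α] [MeasurableSpace β] [StandardBorelSpace β]
  [Nonempty β] [MeasurableSpace Ω]

theorem condDistrib_ae_eq_condOfDensity {P : Measure Ω} [IsFiniteMeasure P] {Y : Ω → α}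
    {X : Ω → β} (hX : AEMeasurable X P) (μ : Measure α) (ν : Measure β) [SFinite μ] [SFinite ν]
    {ρ : α × β → ℝ≥0∞} (hρ : Measurable ρ)
    (hjoint : P.map (fun ω ↦ (Y ω, X ω)) = (μ.prod ν).withDensity ρ) :
    condDistrib X Y P =ᵐ[P.map Y] Kernel.condOfDensity ν ρ := by
  have := Kernel.isFiniteKernel_condOfDensity ν hρ
  have hfin : ∫⁻ p, ρ p ∂(μ.prod ν) ≠ ∞ := by
    rw [← setLIntegral_univ, ← withDensity_apply _ MeasurableSet.univ, ← hjoint]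
    exact measure_ne_top _ _
  have hY : P.map Y = μ.withDensity (fun a ↦ ∫⁻ b, ρ (a, b) ∂ν) := by
    rw [← Measure.fst_map_prodMk₀ hX, hjoint, Measure.fst_withDensity_prod μ ν hρ]
  refine condDistrib_ae_eq_of_measure_eq_compProd Y hX ?_
  rw [hjoint, hY]
  exact Measure.withDensity_prod_eq_compProd_condOfDensity μ ν hρ hfin

end ProbabilityTheory

/-- Posterior density formula of the statistical inverse problem: with prior
density `f`, independent additive noise density `h`, forward map `Θ` and
measurement `G = Θ(X) + E`, for `(law of G)`-a.e. `g` with positive (finite)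
normalizing constant `Z(g) = ∫ f(x) h(g − Θ(x)) dx`, the regular conditional
distribution of `X` given `G = g` has density `x ↦ f(x)h(g − Θ(x))/Z(g)`. -/
theorem posterior_density_formula
    {Ω : Type*} [MeasurableSpace Ω] (P : Measure Ω) [IsProbabilityMeasure P]
    {n m : ℕ} (X : Ω → (Fin n → ℝ)) (E : Ω → (Fin m → ℝ))
    (hX : Measurable X) (hE : Measurable E)
    (hindep : ProbabilityTheory.IndepFun X E P)
    (f : (Fin n → ℝ) → ℝ) (hf_meas : Measurable f) (hf_nonneg : ∀ x, 0 ≤ f x)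
    (hf : Measure.map X P = volume.withDensity (fun x => ENNReal.ofReal (f x)))
    (h : (Fin m → ℝ) → ℝ) (hh_meas : Measurable h) (hh_nonneg : ∀ y, 0 ≤ h y)
    (hh : Measure.map E P = volume.withDensity (fun y => ENNReal.ofReal (h y)))
    (Θ : (Fin n → ℝ) → (Fin m → ℝ)) (hΘ : Measurable Θ)
    (G : Ω → (Fin m → ℝ)) (hG : ∀ ω, G ω = Θ (X ω) + E ω)
    (Z : (Fin m → ℝ) → ℝ) (hZ : ∀ g, Z g = ∫ x, f x * h (g - Θ x)) :
    ∀ᵐ g ∂(Measure.map G P), 0 < Z g →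
      ProbabilityTheory.condDistrib X G P g =
        volume.withDensity (fun x => ENNReal.ofReal (f x * h (g - Θ x) / Z g)) := by
  set ρ : (Fin m → ℝ) × (Fin n → ℝ) → ℝ≥0∞ :=
    fun q ↦ ENNReal.ofReal (f q.2) * ENNReal.ofReal (h (q.1 - Θ q.2))
  have hρ : Measurable ρ := by fun_prop
  have hjoint : P.map (fun ω ↦ (G ω, X ω)) = (volume.prod volume).withDensity ρ := by
    have hT : Measurable fun p : (Fin n → ℝ) × (Fin m → ℝ) ↦ (Θ p.1 + p.2, p.1) := by fun_prop
    have hGX : (fun ω ↦ (G ω, X ω)) = (fun p ↦ (Θ p.1 + p.2, p.1)) ∘ fun ω ↦ (X ω, E ω) :=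
      funext fun ω ↦ by simp [hG]
    rw [hGX, ← Measure.map_map hT (hX.prodMk hE),
      (indepFun_iff_map_prod_eq_prod_map_map hX.aemeasurable hE.aemeasurable).mp hindep, hf, hh]
    exact Measure.map_add_prodMk_prod_withDensity _ _ hΘ hf_meas.ennreal_ofReal
      hh_meas.ennreal_ofReal
  filter_upwards [condDistrib_ae_eq_condOfDensity hX.aemeasurable volume volume hρ hjoint]
    with g hg hZ_pos
  rw [hg, Kernel.condOfDensity_apply _ hρ]
  congr with x
  rw [hZ] at hZ_pos ⊢
  rw [ofReal_div_integral_eq_div_lintegral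
    (ae_of_all _ fun x ↦ mul_nonneg (hf_nonneg x) (hh_nonneg _)) (by fun_prop) hZ_pos]
  simp_rw [ENNReal.ofReal_mul (hf_nonneg _), ρ]
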